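/- Let C be an F_q-linear subspace of F_q^m × F_q^n × F_q^m and let Ĉ be its twisted dual constraint code. Fix an enumeration α₁,…,α_q of the elements of F_q. Then for every y ∈ ℂ and all complex numbers x_{i,j}, z_{i,j} (1 ≤ i ≤ m, 1 ≤ j ≤ q): |C| · Σ_{(w,p,w') ∈ Ĉ} (∏_{i=1}^m x_{i,j(wᵢ)}) · y^{wt(p)} · (∏_{i=1}^m z_{i,j(w'ᵢ)}) = Σ_{(u₁,u₂,u₃) ∈ C} (∏_{i=1}^m Σ_{j=1}^q ω^{−tr(u_{1,i}·α_j)} x_{i,j}) · (1+(q−1)y)^{n−wt(u₂)} (1−y)^{wt(u₂)} · (∏_{i=1}^m Σ_{j=1}^q ω^{+tr(u_{3,i}·α_j)} z_{i,j}), where j(β) denotes the index with α_{j(β)} = β. (This is the MacWilliams identity for the complete-memory weight enumerators of a constraint code and the constraint code of the dual convolutional code.) -/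

import Mathlib

/-!
Let `ψ(a) = ω ^ tr a`, a primitive additive character of `F_q`, and pair triples by
`⟨v, u⟩ = v₁ · u₁ + v₂ · u₂ - v₃ · u₃`, so that `Ĉ` is the orthogonal of `C`. Summing `ψ (-⟨v, u⟩)`
over `u ∈ C` gives `|C|` or `0` according as `v ∈ Ĉ` or not, hence `|C|` times the sum of any
function over `Ĉ` is the sum over `C` of its Fourier transform (Poisson summation). The
complete-memory weight function is a product over coordinates, so its Fourier transform factors:
an outer coordinate contributes `∑ⱼ ψ (∓ uᵢ αⱼ) xᵢⱼ`, and a middle coordinate contributes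
`∑_β ψ (-uᵢ β) y ^ [β ≠ 0]`, which is `1 + (q - 1) y` if `uᵢ = 0` and `1 - y` otherwise.
-/

open scoped Classical

noncomputable section

variable (p : ℕ) [Fact p.Prime] (F : Type) [Field F] [Fintype F] [Algebra (ZMod p) F]

def wt {n : ℕ} (v : Fin n → F) : ℕ := (Finset.univ.filter fun i => v i ≠ 0).card

def twistedDual {m n : ℕ} (C : Set ((Fin m → F) × (Fin n → F) × (Fin m → F))) :
    Set ((Fin m → F) × (Fin n → F) × (Fin m → F)) :=
  {v | ∀ c ∈ C, (∑ i, v.1 i * c.1 i) + (∑ i, v.2.1 i * c.2.1 i)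
      - (∑ i, v.2.2 i * c.2.2 i) = 0}

def omg : ℂ := Complex.exp (2 * Real.pi * Complex.I / p)

open Finset

lemma AddChar.map_sum_eq_prod {A M ι : Type*} [AddCommMonoid A] [CommMonoid M]
    (ψ : AddChar A M) (s : Finset ι) (f : ι → A) :
    ψ (∑ i ∈ s, f i) = ∏ i ∈ s, ψ (f i) :=
  map_prod ψ.toMonoidHom (fun i => Multiplicative.ofAdd (f i)) s

section Fourier

variable {R V : Type*} [CommRing R] [AddCommGroup V] [Module R V] [Fintype V]
  {ψ : AddChar R ℂ}

theorem AddChar.IsPrimitive.sum_submodule_eq_ite (hψ : ψ.IsPrimitive) (B : V →ₗ[R] V →ₗ[R] R)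
    (C : Submodule R V) (v : V) :
    ∑ u, (if u ∈ C then ψ (B v u) else 0) = if ∀ c ∈ C, B v c = 0 then (Nat.card C : ℂ) else 0 := by
  let φ : AddChar C ℂ := ψ.compAddMonoidHom ((B v).comp C.subtype).toAddMonoidHom
  have hφ : φ = 0 ↔ ∀ c ∈ C, B v c = 0 := by
    refine ⟨fun h c hc => ?_, fun h => AddChar.eq_zero_iff.2 fun c => ?_⟩
    · by_contra hne
      obtain ⟨t, ht⟩ := AddChar.ne_one_iff.1 (hψ hne)
      refine ht ?_
      simpa [φ, mul_comm] using AddChar.eq_zero_iff.1 h ⟨t • c, C.smul_mem t hc⟩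
    · simp [φ, h c c.2]
  rw [← sum_filter, sum_subtype _ (p := (· ∈ C)) (by simp)]
  change ∑ c, φ c = _
  rw [AddChar.sum_eq_ite, Nat.card_eq_fintype_card]
  exact if_congr hφ rfl rfl

theorem AddChar.IsPrimitive.card_mul_sum_orthogonal (hψ : ψ.IsPrimitive)
    (B : V →ₗ[R] V →ₗ[R] R) (C : Submodule R V) (Φ : V → ℂ) :
    (Nat.card C : ℂ) * ∑ v, (if ∀ c ∈ C, B v c = 0 then Φ v else 0) =
      ∑ u, if u ∈ C then ∑ v, ψ (-B v u) * Φ v else 0 := by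
  have horth (v : V) : ∑ u, (if u ∈ C then ψ (-B v u) else 0) =
      if ∀ c ∈ C, B v c = 0 then (Nat.card C : ℂ) else 0 := by
    simpa using hψ.sum_submodule_eq_ite (-B) C v
  calc (Nat.card C : ℂ) * ∑ v, (if ∀ c ∈ C, B v c = 0 then Φ v else 0)
      = ∑ v, (∑ u, if u ∈ C then ψ (-B v u) else 0) * Φ v := by
        simp only [horth, mul_sum, ite_mul, zero_mul, mul_ite, mul_zero]
    _ = ∑ u, if u ∈ C then ∑ v, ψ (-B v u) * Φ v else 0 := by
        simp only [sum_mul, ite_mul, zero_mul]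
        rw [sum_comm]
        exact sum_congr rfl fun u _ => by rw [sum_ite_irrel, sum_const_zero]

end Fourier

theorem AddChar.sum_dotProduct_mul_prod {R M ι : Type*} [CommRing R] [Fintype R]
    [CommSemiring M] [Fintype ι] [DecidableEq ι] (ψ : AddChar R M) (c : ι → R) (f : ι → R → M) :
    ∑ w : ι → R, ψ (c ⬝ᵥ w) * ∏ i, f i (w i) = ∏ i, ∑ β, ψ (c i * β) * f i β := by
  simp only [Fintype.prod_sum, dotProduct, ψ.map_sum_eq_prod, ← prod_mul_distrib]

theorem AddChar.sum_dotProduct_mul_prod_equiv {R M ι κ : Type*} [CommRing R] [Fintype R]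
    [CommSemiring M] [Fintype ι] [DecidableEq ι] [Fintype κ] (ψ : AddChar R M) (e : κ ≃ R)
    (c : ι → R) (f : ι → κ → M) :
    ∑ w : ι → R, ψ (c ⬝ᵥ w) * ∏ i, f i (e.symm (w i)) = ∏ i, ∑ j, ψ (c i * e j) * f i j := by
  rw [ψ.sum_dotProduct_mul_prod c fun i β => f i (e.symm β)]
  refine prod_congr rfl fun i _ => ?_
  rw [← e.sum_comp]
  simp only [Equiv.symm_apply_apply]

theorem AddChar.IsPrimitive.sum_mul_ite_eq_zero {R : Type*} [CommRing R] [Fintype R]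
    [DecidableEq R] {ψ : AddChar R ℂ} (hψ : ψ.IsPrimitive) (c : R) (y : ℂ) :
    ∑ β, ψ (c * β) * (if β = 0 then 1 else y) =
      if c = 0 then 1 + ((Fintype.card R : ℂ) - 1) * y else 1 - y := by
  have hsplit (β : R) : ψ (c * β) * (if β = 0 then 1 else y) =
      y * ψ (β * c) + if β = 0 then 1 - y else 0 := by
    split_ifs with hβ
    · simp [hβ]
    · rw [mul_comm c]; ring
  rw [sum_congr rfl fun β _ => hsplit β, sum_add_distrib, ← mul_sum,
    AddChar.sum_mulShift c hψ, sum_ite_eq' univ (0 : R), if_pos (mem_univ _)]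
  split_ifs <;> ring

theorem prod_ite_eq_zero_eq_pow_wt {K : Type} {M : Type*} [Field K] [CommMonoid M] {n : ℕ}
    (u : Fin n → K) (a b : M) :
    ∏ i, (if u i = 0 then a else b) = a ^ (n - wt K u) * b ^ wt K u := by
  have hcard : #{i | u i = 0} + wt K u = n :=
    (card_filter_add_card_filter_not (s := univ) fun i => u i = 0).trans (by simp)
  rw [prod_ite, prod_const, prod_const, show n - wt K u = #{i | u i = 0} by omega]
  rfl

theorem AddChar.IsPrimitive.sum_dotProduct_mul_pow_wt {K : Type} [Field K] [Fintype K]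
    {ψ : AddChar K ℂ} (hψ : ψ.IsPrimitive) {n : ℕ} (c : Fin n → K) (y : ℂ) :
    ∑ w : Fin n → K, ψ (c ⬝ᵥ w) * y ^ wt K w =
      (1 + ((Fintype.card K : ℂ) - 1) * y) ^ (n - wt K c) * (1 - y) ^ wt K c := by
  have hpow (w : Fin n → K) : y ^ wt K w = ∏ i, if w i = 0 then 1 else y := by
    rw [prod_ite_eq_zero_eq_pow_wt, one_pow, one_mul]
  simp_rw [hpow]
  rw [ψ.sum_dotProduct_mul_prod c fun _ β => if β = 0 then 1 else y]
  simp_rw [hψ.sum_mul_ite_eq_zero]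
  exact prod_ite_eq_zero_eq_pow_wt c _ _

theorem wt_neg {K : Type} [Field K] {n : ℕ} (v : Fin n → K) : wt K (-v) = wt K v := by
  simp only [wt, Pi.neg_apply, ne_eq, neg_eq_zero]

def twistedPairing (R : Type*) [CommRing R] (m n : ℕ) :
    (Fin m → R) × (Fin n → R) × (Fin m → R) →ₗ[R] (Fin m → R) × (Fin n → R) × (Fin m → R) →ₗ[R] R :=
  LinearMap.mk₂ R (fun v u => v.1 ⬝ᵥ u.1 + v.2.1 ⬝ᵥ u.2.1 - v.2.2 ⬝ᵥ u.2.2)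
    (fun _ _ _ => by simp only [Prod.fst_add, Prod.snd_add, add_dotProduct]; ring)
    (fun _ _ _ => by simp only [Prod.smul_fst, Prod.smul_snd, smul_dotProduct, smul_eq_mul]; ring)
    (fun _ _ _ => by simp only [Prod.fst_add, Prod.snd_add, dotProduct_add]; ring)
    (fun _ _ _ => by simp only [Prod.smul_fst, Prod.smul_snd, dotProduct_smul, smul_eq_mul]; ring)

theorem mem_twistedDual_iff {K : Type} [Field K] {m n : ℕ}
    (C : Set ((Fin m → K) × (Fin n → K) × (Fin m → K)))
    (v : (Fin m → K) × (Fin n → K) × (Fin m → K)) :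
    v ∈ twistedDual K C ↔ ∀ c ∈ C, twistedPairing K m n v c = 0 :=
  Iff.rfl

theorem AddChar.IsPrimitive.sum_neg_twistedPairing_mul {K : Type} [Field K] [Fintype K]
    {ψ : AddChar K ℂ} (hψ : ψ.IsPrimitive) {m n : ℕ} (e : Fin (Fintype.card K) ≃ K) (y : ℂ)
    (x z : Fin m → Fin (Fintype.card K) → ℂ) (u : (Fin m → K) × (Fin n → K) × (Fin m → K)) :
    ∑ v : (Fin m → K) × (Fin n → K) × (Fin m → K), ψ (-twistedPairing K m n v u) *
        ((∏ i, x i (e.symm (v.1 i))) * y ^ wt K v.2.1 * ∏ i, z i (e.symm (v.2.2 i))) =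
      (∏ i, ∑ j, ψ (-u.1 i * e j) * x i j) *
        ((1 + ((Fintype.card K : ℂ) - 1) * y) ^ (n - wt K u.2.1) * (1 - y) ^ wt K u.2.1) *
        ∏ i, ∑ j, ψ (u.2.2 i * e j) * z i j := by
  have hsplit (v : (Fin m → K) × (Fin n → K) × (Fin m → K)) : ψ (-twistedPairing K m n v u) =
      ψ (-u.1 ⬝ᵥ v.1) * ψ (-u.2.1 ⬝ᵥ v.2.1) * ψ (u.2.2 ⬝ᵥ v.2.2) := by
    rw [← AddChar.map_add_eq_mul, ← AddChar.map_add_eq_mul]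
    congr 1
    simp only [twistedPairing, LinearMap.mk₂_apply, neg_dotProduct, dotProduct_comm u.1,
      dotProduct_comm u.2.1, dotProduct_comm u.2.2]
    ring
  have hfirst := ψ.sum_dotProduct_mul_prod_equiv e (-u.1) x
  have hmid := hψ.sum_dotProduct_mul_pow_wt (-u.2.1) y
  have hlast := ψ.sum_dotProduct_mul_prod_equiv e u.2.2 z
  simp only [Pi.neg_apply, wt_neg] at hfirst hmid
  rw [← hfirst, ← hmid, ← hlast, mul_assoc, sum_mul_sum, sum_mul_sum]
  simp only [mul_sum, Fintype.sum_prod_type, hsplit]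
  exact Fintype.sum_congr _ _ fun a => Fintype.sum_congr _ _ fun b =>
    Fintype.sum_congr _ _ fun c => by ring

def traceChar (N : ℕ) [NeZero N] (K : Type*) [Field K] [Algebra (ZMod N) K] : AddChar K ℂ :=
  ZMod.stdAddChar.compAddMonoidHom (Algebra.trace (ZMod N) K).toAddMonoidHom

theorem traceChar_apply (N : ℕ) [NeZero N] {K : Type*} [Field K] [Algebra (ZMod N) K] (a : K) :
    traceChar N K a = omg N ^ ((Algebra.trace (ZMod N) K a).val : ℤ) := by
  rw [zpow_natCast, omg, ← Complex.exp_nat_mul, traceChar, AddChar.compAddMonoidHom_apply,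
    ZMod.stdAddChar_apply, ZMod.toCircle_apply, LinearMap.toAddMonoidHom_coe]
  congr 1
  ring

theorem isPrimitive_traceChar : (traceChar p F).IsPrimitive := by
  refine AddChar.IsPrimitive.of_ne_one (AddChar.ne_one_iff.2 ?_)
  obtain ⟨a, ha⟩ : ∃ a : F, Algebra.trace (ZMod p) F a ≠ 0 := by
    simpa [funext_iff, LinearMap.ext_iff] using Algebra.trace_ne_zero (ZMod p) F
  refine ⟨a, fun h => ha (ZMod.injective_stdAddChar ?_)⟩
  rw [AddChar.map_zero_eq_one]
  exact h

theorem stmt16 (m n : ℕ)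
    (C : Submodule F ((Fin m → F) × (Fin n → F) × (Fin m → F)))
    (e : Fin (Fintype.card F) ≃ F) (y : ℂ)
    (x z : Fin m → Fin (Fintype.card F) → ℂ) :
    (Nat.card C : ℂ) *
        ∑ v : (Fin m → F) × (Fin n → F) × (Fin m → F),
          (if v ∈ twistedDual F (C : Set ((Fin m → F) × (Fin n → F) × (Fin m → F))) then
            (∏ i, x i (e.symm (v.1 i))) * y ^ wt F v.2.1 *
              ∏ i, z i (e.symm (v.2.2 i))
          else 0)
      = ∑ u : (Fin m → F) × (Fin n → F) × (Fin m → F),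
          (if u ∈ C then
            (∏ i, ∑ j, omg p ^ (-((Algebra.trace (ZMod p) F (u.1 i * e j)).val : ℤ)) * x i j) *
              (1 + ((Fintype.card F : ℂ) - 1) * y) ^ (n - wt F u.2.1) *
              (1 - y) ^ wt F u.2.1 *
              ∏ i, ∑ j, omg p ^ (((Algebra.trace (ZMod p) F (u.2.2 i * e j)).val : ℤ)) * z i j
          else 0) := by
  have hψ := isPrimitive_traceChar p F
  simp only [mem_twistedDual_iff, SetLike.mem_coe]
  rw [hψ.card_mul_sum_orthogonal]
  refine Fintype.sum_congr _ _ fun u => if_congr Iff.rfl ?_ rfl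
  rw [hψ.sum_neg_twistedPairing_mul, mul_assoc _ ((1 + _) ^ _)]
  simp only [← traceChar_apply, zpow_neg, ← AddChar.map_neg_eq_inv, neg_mul]
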